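/- arXiv:2405.05546 — 5 statements merged into one kernel-verified Lean document; each statement's English description precedes it below -/
import Mathlib

section
/- Let X be a finite type and f : X → X with ≤f antisymmetric, and let root f n denote the unique fixed point reachable from n by iterating f. Then for all n m : X, root f n = root f m if and only if n ≡f m (i.e., there exists k with n ≤f k and m ≤f k). -/
/-! Since `f` is a function, the points reachable from `n` form a chain for `≤f`, and a fixed
point reachable from `n` is its last element. So two fixed points reachable from a common `k`
coincide, which makes `root` constant along `≤f` and gives `n ≡f m → root n = root m`;
conversely `root n` itself witnesses `n ≡f m`. -/

def lef {X : Type*} (f : X → X) (n m : X) : Prop :=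
  Relation.ReflTransGen (fun a b => b = f a) n m

def eqf {X : Type*} (f : X → X) (n m : X) : Prop :=
  ∃ k, lef f n k ∧ lef f m k

section

variable {X : Type*} {f : X → X}

theorem lef_total {n a b : X} (ha : lef f n a) (hb : lef f n b) : lef f a b ∨ lef f b a :=
  Relation.ReflTransGen.total_of_right_unique (fun _ _ _ hb hc => hb.trans hc.symm) ha hb

theorem eq_of_lef_of_isFixedPt {r a : X} (hr : Function.IsFixedPt f r) (h : lef f r a) :
    a = r := by
  induction h with
  | refl => rfl
  | tail _ hbc ih => rw [hbc, ih, hr]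

theorem lef_isFixedPt_of_lef {n a r : X} (ha : lef f n a) (hr : lef f n r)
    (hfix : Function.IsFixedPt f r) : lef f a r := by
  rcases lef_total ha hr with har | hra
  · exact har
  · rw [eq_of_lef_of_isFixedPt hfix hra]
    exact Relation.ReflTransGen.refl

theorem isFixedPt_eq_of_lef {k r s : X} (hr : lef f k r) (hs : lef f k s)
    (hrfix : Function.IsFixedPt f r) (hsfix : Function.IsFixedPt f s) : r = s :=
  eq_of_lef_of_isFixedPt hsfix (lef_isFixedPt_of_lef hs hr hrfix)

end

theorem stmt_7_general {X : Type*} (f : X → X)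
    (root : X → X)
    (hroot : ∀ n, lef f n (root n) ∧ f (root n) = root n) :
    ∀ n m : X, root n = root m ↔ eqf f n m := by
  have root_eq_of_lef {n k : X} (h : lef f n k) : root n = root k :=
    isFixedPt_eq_of_lef (lef_isFixedPt_of_lef h (hroot n).1 (hroot n).2) (hroot k).1
      (hroot n).2 (hroot k).2
  intro n m
  constructor
  · intro h
    exact ⟨root n, (hroot n).1, h ▸ (hroot m).1⟩
  · rintro ⟨k, hn, hm⟩
    rw [root_eq_of_lef hn, root_eq_of_lef hm]

theorem stmt_7 {X : Type*} [Fintype X] (f : X → X)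
    (antisym : ∀ n m : X, lef f n m → lef f m n → n = m)
    (root : X → X)
    (hroot : ∀ n, lef f n (root n) ∧ f (root n) = root n) :
    ∀ n m : X, root n = root m ↔ eqf f n m :=
  stmt_7_general f root hroot
end

section
/- Path compression preserves the equivalence relation: let X be a finite type, f : X → X with ≤f antisymmetric, x : X, and rx : X with f x ≠ x and rx ≤f root f x and x <f rx (i.e., x ≤f rx and x ≠ rx). Let g = Function.update f x rx. Then for all n m : X, n ≡g m ↔ n ≡f m. -/
/-! Every step of `g = update f x rx` is an `f`-path (the only new step jumps from `x` forward to
`rx`), so `g`-reachability implies `f`-reachability. Conversely every `n` still `g`-reaches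
`root f n`: an `f`-path to it either avoids `x` and survives the update, or passes through `x`, where
`g` jumps to `rx`; then `root n = root x`, and the `f`-path from `rx` to `root x` avoids `x`, since
by antisymmetry `x` cannot be reached again from `x <f rx`. Since `f`-equivalent elements have the
same root, this gives the reverse implication. -/

section

variable {X : Type*}

theorem lef_eq_of_fixed {f : X → X} {p q : X} (hp : f p = p) (h : lef f p q) : q = p := by
  induction h with
  | refl => rfl
  | tail _ hstep ih => rw [hstep, ih, hp]

theorem lef_total_s9 {f : X → X} {a b c : X} (hab : lef f a b) (hac : lef f a c) :
    lef f b c ∨ lef f c b :=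
  Relation.ReflTransGen.total_of_right_unique (fun _ _ _ h₁ h₂ => h₁.trans h₂.symm) hab hac

theorem fixed_eq_of_lef {f : X → X} {a p q : X} (hap : lef f a p) (hp : f p = p)
    (haq : lef f a q) (hq : f q = q) : p = q := by
  rcases lef_total_s9 hap haq with hpq | hqp
  · exact (lef_eq_of_fixed hp hpq).symm
  · exact lef_eq_of_fixed hq hqp

theorem root_eq_of_lef {f : X → X} {root : X → X}
    (hroot : ∀ n, lef f n (root n) ∧ f (root n) = root n) {n k : X} (h : lef f n k) :
    root k = root n :=
  fixed_eq_of_lef (h.trans (hroot k).1) (hroot k).2 (hroot n).1 (hroot n).2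

variable [DecidableEq X]

theorem lef_of_lef_update {f : X → X} {x y a b : X} (hxy : lef f x y)
    (h : lef (Function.update f x y) a b) : lef f a b := by
  refine Relation.reflTransGen_closed (fun c d hcd => ?_) _ _ h
  subst hcd
  by_cases hc : c = x
  · subst hc
    rwa [Function.update_self]
  · rw [Function.update_of_ne hc]
    exact .single rfl

theorem lef_update_of_forall_ne {f : X → X} {x y a b : X} (hav : ∀ c, lef f a c → c ≠ x)
    (h : lef f a b) : lef (Function.update f x y) a b := by
  induction h with
  | refl => exact .refl
  | @tail c _ hac hstep ih =>
    refine ih.tail ?_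
    rw [Function.update_of_ne (hav c hac)]
    exact hstep

theorem lef_update_of_lef {f : X → X} {x y a b : X}
    (hy : lef f x b → lef (Function.update f x y) y b) (h : lef f a b) :
    lef (Function.update f x y) a b := by
  induction h using Relation.ReflTransGen.head_induction_on with
  | refl => exact .refl
  | @head c d hstep hdb ih =>
    by_cases hc : c = x
    · subst hc
      exact .head (Function.update_self c y f).symm (hy (.head hstep hdb))
    · exact .head (by rw [Function.update_of_ne hc]; exact hstep) ih

theorem lef_update_root {f : X → X} (antisym : ∀ n m : X, lef f n m → lef f m n → n = m)
    {x rx : X} {root : X → X} (hroot : ∀ n, lef f n (root n) ∧ f (root n) = root n)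
    (hrx : lef f rx (root x)) (hlt : lef f x rx ∧ x ≠ rx) (a : X) :
    lef (Function.update f x rx) a (root a) := by
  have hrx_root : lef (Function.update f x rx) rx (root x) :=
    lef_update_of_forall_ne (fun c hc hcx => hlt.2 (antisym x rx hlt.1 (hcx ▸ hc))) hrx
  refine lef_update_of_lef (fun hxa => ?_) (hroot a).1
  rwa [fixed_eq_of_lef hxa (hroot a).2 (hroot x).1 (hroot x).2]

end

theorem stmt_9_general {X : Type*} [DecidableEq X] (f : X → X)
    (antisym : ∀ n m : X, lef f n m → lef f m n → n = m)
    (x rx : X) (root : X → X)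
    (hroot : ∀ n, lef f n (root n) ∧ f (root n) = root n)
    (hrx : lef f rx (root x))
    (hlt : lef f x rx ∧ x ≠ rx) :
    ∀ n m : X, eqf (Function.update f x rx) n m ↔ eqf f n m := by
  intro n m
  constructor
  · rintro ⟨k, hn, hm⟩
    exact ⟨k, lef_of_lef_update hlt.1 hn, lef_of_lef_update hlt.1 hm⟩
  · rintro ⟨k, hn, hm⟩
    have hroot_n := lef_update_root antisym hroot hrx hlt n
    have hroot_m := lef_update_root antisym hroot hrx hlt m
    rw [← root_eq_of_lef hroot hn] at hroot_n
    rw [← root_eq_of_lef hroot hm] at hroot_m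
    exact ⟨root k, hroot_n, hroot_m⟩

theorem stmt_9 {X : Type*} [Fintype X] [DecidableEq X] (f : X → X)
    (antisym : ∀ n m : X, lef f n m → lef f m n → n = m)
    (x rx : X) (root : X → X)
    (hroot : ∀ n, lef f n (root n) ∧ f (root n) = root n)
    (hx : f x ≠ x)
    (hrx : lef f rx (root x))
    (hlt : lef f x rx ∧ x ≠ rx) :
    ∀ n m : X, eqf (Function.update f x rx) n m ↔ eqf f n m :=
  stmt_9_general f antisym x rx root hroot hrx hlt
end

section
/- Path compression preserves the anti-symmetry (acyclicity) invariant: let X be a finite type, f : X → X with ≤f antisymmetric, x rx : X with x <f rx (x ≤f rx and x ≠ rx). Then ≤g is also antisymmetric where g = Function.update f x rx. -/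
theorem lef_self_apply {X : Type*} (f : X → X) (a : X) : lef f a (f a) :=
  Relation.ReflTransGen.single rfl

theorem lef_of_lef_of_forall_lef_apply {X : Type*} {f g : X → X}
    (hg : ∀ a, lef f a (g a)) {n m : X} (h : lef g n m) : lef f n m :=
  Relation.reflTransGen_closed (fun a b (hab : b = g a) => hab ▸ hg a) n m h

theorem lef_update_apply {X : Type*} [DecidableEq X] {f : X → X} {x rx : X}
    (hx : lef f x rx) (a : X) : lef f a (Function.update f x rx a) := by
  rcases eq_or_ne a x with rfl | ha
  · rwa [Function.update_self]
  · rw [Function.update_of_ne ha]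
    exact lef_self_apply f a

theorem stmt_10_general {X : Type*} [DecidableEq X] (f : X → X)
    (antisym : ∀ n m : X, lef f n m → lef f m n → n = m)
    (x rx : X)
    (hlt : lef f x rx ∧ x ≠ rx) :
    ∀ n m : X, lef (Function.update f x rx) n m →
      lef (Function.update f x rx) m n → n = m := fun n m hnm hmn =>
  antisym n m (lef_of_lef_of_forall_lef_apply (lef_update_apply hlt.1) hnm)
    (lef_of_lef_of_forall_lef_apply (lef_update_apply hlt.1) hmn)

theorem stmt_10 {X : Type*} [Fintype X] [DecidableEq X] (f : X → X)
    (antisym : ∀ n m : X, lef f n m → lef f m n → n = m)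
    (x rx : X)
    (hlt : lef f x rx ∧ x ≠ rx) :
    ∀ n m : X, lef (Function.update f x rx) n m →
      lef (Function.update f x rx) m n → n = m :=
  stmt_10_general f antisym x rx hlt
end

section
/- Union step correctness: let X be a finite type, f : X → X with ≤f antisymmetric, and rx ry : X with f rx = rx, f ry = ry, and rx ≠ ry. Let g = Function.update f rx ry. Then ≤g is antisymmetric, and the equivalence relation ≡g equals the equivalence closure of ≡f ∪ {(rx,ry),(ry,rx)}; in particular n ≡g m ↔ (n ≡f m) ∨ (n ≡f rx ∧ m ≡f ry) ∨ (n ≡f ry ∧ m ≡f rx). -/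
/-! Redirecting the root `rx` to `ry` only adds the pairs `(n, ry)` with `n ≤f rx`: a `g`-path
either avoids `rx`, so it is an `f`-path, or it reaches `rx`, jumps to `ry` and stays there. Since a root is `≤f`-above only itself, antisymmetry and the description of
`≡g` follow by case analysis on this characterisation of `≤g`. -/

section

variable {X : Type*} {f : X → X}

theorem lef_refl (a : X) : lef f a a := .refl

theorem eq_of_lef_of_fixed {a m : X} (ha : f a = a) (h : lef f a m) : m = a := by
  induction h with
  | refl => rfl
  | tail _ hc ih => rw [hc, ih, ha]

theorem lef_of_eqf_of_fixed {a r : X} (hr : f r = r) : eqf f a r → lef f a r := by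
  rintro ⟨k, hak, hrk⟩
  exact eq_of_lef_of_fixed hr hrk ▸ hak

variable [DecidableEq X] {rx ry : X}

theorem lef_update_of_lef_s11 (hrx : f rx = rx) {n m : X} (h : lef f n m) :
    lef (Function.update f rx ry) n m := by
  induction h with
  | refl => exact .refl
  | @tail b c _ hc ih =>
    by_cases hb : b = rx
    · subst hb
      rwa [hc, hrx]
    · exact ih.tail (by rw [hc, Function.update_of_ne hb])

theorem lef_update_iff (hrx : f rx = rx) (hry : f ry = ry) {n m : X} :
    lef (Function.update f rx ry) n m ↔ lef f n m ∨ (lef f n rx ∧ m = ry) := by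
  refine ⟨fun h => ?_, ?_⟩
  · induction h with
    | refl => exact .inl .refl
    | @tail b c _ hc ih =>
      by_cases hb : b = rx
      · subst hb
        exact .inr ⟨ih.elim id And.left, by rw [hc, Function.update_self]⟩
      · rw [Function.update_of_ne hb] at hc
        rcases ih with h | ⟨h, rfl⟩
        · exact .inl (h.tail hc)
        · exact .inr ⟨h, hc.trans hry⟩
  · rintro (h | ⟨h, rfl⟩)
    · exact lef_update_of_lef_s11 hrx h
    · exact (lef_update_of_lef_s11 hrx h).tail (Function.update_self rx m f).symm

theorem lef_update_antisymm (antisym : ∀ n m : X, lef f n m → lef f m n → n = m)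
    (hrx : f rx = rx) (hry : f ry = ry) {n m : X} (hnm : lef (Function.update f rx ry) n m)
    (hmn : lef (Function.update f rx ry) m n) : n = m := by
  rw [lef_update_iff hrx hry] at hnm hmn
  rcases hnm with hnm | ⟨-, rfl⟩ <;> rcases hmn with hmn | ⟨-, rfl⟩
  · exact antisym n m hnm hmn
  · exact (eq_of_lef_of_fixed hry hnm).symm
  · exact eq_of_lef_of_fixed hry hmn
  · rfl

theorem eqf_update_iff (hrx : f rx = rx) (hry : f ry = ry) {n m : X} :
    eqf (Function.update f rx ry) n m ↔
      eqf f n m ∨ (eqf f n rx ∧ eqf f m ry) ∨ (eqf f n ry ∧ eqf f m rx) := by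
  have lift {a b : X} (h : lef f a b) : lef (Function.update f rx ry) a b :=
    lef_update_of_lef_s11 hrx h
  constructor
  · rintro ⟨k, hn, hm⟩
    rw [lef_update_iff hrx hry] at hn hm
    rcases hn with hn | ⟨hn, hkn⟩ <;> rcases hm with hm | ⟨hm, hkm⟩
    · exact .inl ⟨k, hn, hm⟩
    · exact .inr (.inr ⟨⟨ry, hkm ▸ hn, lef_refl ry⟩, ⟨rx, hm, lef_refl rx⟩⟩)
    · exact .inr (.inl ⟨⟨rx, hn, lef_refl rx⟩, ⟨ry, hkn ▸ hm, lef_refl ry⟩⟩)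
    · exact .inl ⟨rx, hn, hm⟩
  · have to_ry {a : X} (ha : eqf f a rx) : lef (Function.update f rx ry) a ry :=
      (lef_update_iff hrx hry).2 (.inr ⟨lef_of_eqf_of_fixed hrx ha, rfl⟩)
    rintro (⟨k, hn, hm⟩ | ⟨hn, hm⟩ | ⟨hn, hm⟩)
    · exact ⟨k, lift hn, lift hm⟩
    · exact ⟨ry, to_ry hn, lift (lef_of_eqf_of_fixed hry hm)⟩
    · exact ⟨ry, lift (lef_of_eqf_of_fixed hry hn), to_ry hm⟩

end

theorem stmt_11_general {X : Type*} [DecidableEq X] (f : X → X)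
    (antisym : ∀ n m : X, lef f n m → lef f m n → n = m)
    (rx ry : X) (hrx : f rx = rx) (hry : f ry = ry) :
    (∀ n m : X, lef (Function.update f rx ry) n m →
        lef (Function.update f rx ry) m n → n = m) ∧
    (∀ n m : X, eqf (Function.update f rx ry) n m ↔
        (eqf f n m ∨ (eqf f n rx ∧ eqf f m ry) ∨ (eqf f n ry ∧ eqf f m rx))) :=
  ⟨fun _ _ => lef_update_antisymm antisym hrx hry, fun _ _ => eqf_update_iff hrx hry⟩

theorem stmt_11 {X : Type*} [Fintype X] [DecidableEq X] (f : X → X)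
    (antisym : ∀ n m : X, lef f n m → lef f m n → n = m)
    (rx ry : X) (hrx : f rx = rx) (hry : f ry = ry) (hne : rx ≠ ry) :
    (∀ n m : X, lef (Function.update f rx ry) n m →
        lef (Function.update f rx ry) m n → n = m) ∧
    (∀ n m : X, eqf (Function.update f rx ry) n m ↔
        (eqf f n m ∨ (eqf f n rx ∧ eqf f m ry) ∨ (eqf f n ry ∧ eqf f m rx))) :=
  stmt_11_general f antisym rx ry hrx hry
end

section
/- Union grows the equivalence: with X finite, f : X → X with ≤f antisymmetric, rx ry roots of f (f rx = rx, f ry = ry), and g = Function.update f rx ry, the relation retr f = {(n,m) | n ≡f m} is contained in retr g, and (rx, ry) ∈ retr g. -/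
def retr {X : Type*} (f : X → X) : Set (X × X) := {p | eqf f p.1 p.2}

section

variable {X : Type*} {f g : X → X}

theorem lef_mono (hfg : ∀ x, g x = f x ∨ f x = x) {n m : X} (h : lef f n m) : lef g n m := by
  induction h with
  | refl => exact .refl
  | @tail b c _ hstep ih =>
    rcases hfg b with hagree | hfixed
    · exact ih.tail (hstep.trans hagree.symm)
    · exact hstep.trans hfixed ▸ ih

theorem retr_mono (hfg : ∀ x, g x = f x ∨ f x = x) : retr f ⊆ retr g :=
  fun _ ⟨k, hn, hm⟩ => ⟨k, lef_mono hfg hn, lef_mono hfg hm⟩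

variable [DecidableEq X]

theorem retr_subset_retr_update {a : X} (ha : f a = a) (b : X) :
    retr f ⊆ retr (Function.update f a b) :=
  retr_mono fun x => by
    rcases eq_or_ne x a with rfl | hx
    · exact .inr ha
    · exact .inl (Function.update_of_ne hx b f)

theorem mem_retr_update (f : X → X) (a b : X) : (a, b) ∈ retr (Function.update f a b) :=
  ⟨b, .single (by simp), .refl⟩

end

theorem stmt_12_general {X : Type*} [DecidableEq X] (f : X → X)
    (rx ry : X) (hrx : f rx = rx) :
    retr f ⊆ retr (Function.update f rx ry) ∧
    (rx, ry) ∈ retr (Function.update f rx ry) :=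
  ⟨retr_subset_retr_update hrx ry, mem_retr_update f rx ry⟩

theorem stmt_12 {X : Type*} [Fintype X] [DecidableEq X] (f : X → X)
    (antisym : ∀ n m : X, lef f n m → lef f m n → n = m)
    (rx ry : X) (hrx : f rx = rx) (hry : f ry = ry) :
    retr f ⊆ retr (Function.update f rx ry) ∧
    (rx, ry) ∈ retr (Function.update f rx ry) :=
  stmt_12_general f rx ry hrx
end
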